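/- arXiv:2003.07991 — 4 statements merged into one kernel-verified Lean document; each statement's English description precedes it below -/
import Mathlib

section
/- Let the idealized posterior density be p_{u|y}(u) = Z^{-1} exp(-(1/2)‖y - G(u)‖_Γ²) q_u(u) with Z = ∫ exp(-(1/2)‖y - G(u)‖_Γ²) q_u(u) du, and let the marginal approximate posterior density be q_{u|y}(u) = Z̃^{-1} (∫_A exp(-(1/2)‖y - G^a(u)‖_Γ²) q_a(a) da) q_u(u) with Z̃ = ∫∫ exp(-(1/2)‖y - G^a(u)‖_Γ²) q_u(u) q_a(a) du da. If G is bounded, then there exist constants C > 0 and ε₀ > 0 (depending only on y, Γ and sup_u ‖G(u)‖, but not on ε or the family {G^a}) such that for every 0 < ε ≤ ε₀, if ‖G^a(u) - G(u)‖ < ε for (q_u ⊗ q_a)-almost every (u,a), then the total variation distance between the probability measures with densities q_{u|y} and p_{u|y} is at most Cε. -/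
open MeasureTheory Matrix

/-- The squared weighted norm `‖x‖_Γ² = ‖Γ^{-1/2} x‖² = xᵀ Γ⁻¹ x` associated to a
positive definite covariance matrix `Γ`. -/
noncomputable def wSq {m : ℕ} (Γ : Matrix (Fin m) (Fin m) ℝ) (v : EuclideanSpace ℝ (Fin m)) : ℝ :=
  (fun i => v i) ⬝ᵥ Γ⁻¹.mulVec (fun i => v i)

/-- Total variation distance between two measures:
`d_TV(μ,ν) = sup_B |μ(B) - ν(B)|` over measurable sets `B`. -/
noncomputable def tvDist {X : Type*} [MeasurableSpace X] (μ ν : Measure X) : ℝ :=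
  ⨆ B : {B : Set X // MeasurableSet B}, |(μ (B : Set X)).toReal - (ν (B : Set X)).toReal|

/-!
Both posteriors are normalized densities with respect to the prior `P_u = q_u du`: the idealized
one has likelihood `f u = Φ (y - G u)`, the approximate one the marginal likelihood
`g u = ∫ Φ (y - Gᵃ u) q_a(a) da`, where `Φ v = exp (-½ ‖v‖²_Γ)`. Since `G` is bounded and
`‖Gᵃ u - G u‖ < ε ≤ 1`, every argument of `Φ` lies in one closed ball, on which the smooth `Φ`
is Lipschitz (constant `L`) and bounded below by some `c > 0`. Hence `|g - f| ≤ L ε` almost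
everywhere and `f ≥ c`; normalizing costs at most a factor `2 / ∫ g ≤ 4 / c` in `L¹`, and the
`L¹` distance of the densities bounds the total variation distance.
-/

open Metric Set

noncomputable def gaussianLikelihood {m : ℕ} (Γ : Matrix (Fin m) (Fin m) ℝ)
    (v : EuclideanSpace ℝ (Fin m)) : ℝ :=
  Real.exp (-(1/2) * wSq Γ v)

section Likelihood

variable {m : ℕ} {Γ : Matrix (Fin m) (Fin m) ℝ}

lemma wSq_nonneg (hΓ : Γ.PosDef) (v : EuclideanSpace ℝ (Fin m)) : 0 ≤ wSq Γ v :=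
  hΓ.inv.posSemidef.dotProduct_mulVec_nonneg _

lemma contDiff_wSq (Γ : Matrix (Fin m) (Fin m) ℝ) {n : WithTop ℕ∞} : ContDiff ℝ n (wSq Γ) := by
  unfold wSq Matrix.mulVec dotProduct
  fun_prop

lemma contDiff_gaussianLikelihood (Γ : Matrix (Fin m) (Fin m) ℝ) {n : WithTop ℕ∞} :
    ContDiff ℝ n (gaussianLikelihood Γ) :=
  Real.contDiff_exp.comp (contDiff_const.mul (contDiff_wSq Γ))

lemma measurable_gaussianLikelihood (Γ : Matrix (Fin m) (Fin m) ℝ) :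
    Measurable (gaussianLikelihood Γ) :=
  (contDiff_gaussianLikelihood Γ (n := 0)).continuous.measurable

lemma gaussianLikelihood_pos (Γ : Matrix (Fin m) (Fin m) ℝ) (v : EuclideanSpace ℝ (Fin m)) :
    0 < gaussianLikelihood Γ v :=
  Real.exp_pos _

lemma gaussianLikelihood_le_one (hΓ : Γ.PosDef) (v : EuclideanSpace ℝ (Fin m)) :
    gaussianLikelihood Γ v ≤ 1 :=
  Real.exp_le_one_iff.2 (by nlinarith [wSq_nonneg hΓ v])

lemma norm_gaussianLikelihood_le_one (hΓ : Γ.PosDef) (v : EuclideanSpace ℝ (Fin m)) :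
    ‖gaussianLikelihood Γ v‖ ≤ 1 := by
  rw [Real.norm_of_nonneg (gaussianLikelihood_pos Γ v).le]
  exact gaussianLikelihood_le_one hΓ v

lemma exists_pos_le_gaussianLikelihood (Γ : Matrix (Fin m) (Fin m) ℝ) (r : ℝ) :
    ∃ c > 0, ∀ v ∈ closedBall 0 r, c ≤ gaussianLikelihood Γ v :=
  (isCompact_closedBall 0 r).exists_forall_le'
    (contDiff_gaussianLikelihood Γ (n := 0)).continuous.continuousOn
    fun v _ => gaussianLikelihood_pos Γ v

lemma exists_lipschitzOnWith_gaussianLikelihood (Γ : Matrix (Fin m) (Fin m) ℝ) (r : ℝ) :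
    ∃ L : NNReal, 0 < L ∧ LipschitzOnWith L (gaussianLikelihood Γ) (closedBall 0 r) := by
  obtain ⟨L, hL⟩ := ((contDiff_gaussianLikelihood Γ (n := 1)).locallyLipschitz.locallyLipschitzOn
    ).exists_lipschitzOnWith_of_compact (isCompact_closedBall 0 r)
  exact ⟨L + 1, by positivity, hL.weaken le_self_add⟩

lemma integrable_gaussianLikelihood_comp (hΓ : Γ.PosDef) {X : Type*} [MeasurableSpace X]
    {μ : Measure X} [IsFiniteMeasure μ] {h : X → EuclideanSpace ℝ (Fin m)} (hh : Measurable h) :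
    Integrable (fun x => gaussianLikelihood Γ (h x)) μ :=
  .of_bound ((measurable_gaussianLikelihood Γ).comp hh).aestronglyMeasurable 1
    (ae_of_all _ fun x => norm_gaussianLikelihood_le_one hΓ (h x))

lemma norm_integral_gaussianLikelihood_le_one (hΓ : Γ.PosDef) {X : Type*} [MeasurableSpace X]
    {P : Measure X} [IsProbabilityMeasure P] (v : X → EuclideanSpace ℝ (Fin m)) :
    ‖∫ x, gaussianLikelihood Γ (v x) ∂P‖ ≤ 1 :=
  (norm_integral_le_of_norm_le_const (ae_of_all _ fun x =>
    norm_gaussianLikelihood_le_one hΓ (v x))).trans_eq (by simp)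

end Likelihood

section Density

variable {X : Type*} [MeasurableSpace X] {μ : Measure X} {q : X → ℝ}

lemma isProbabilityMeasure_withDensity_ofReal (hq0 : ∀ x, 0 ≤ q x) (hq1 : ∫ x, q x ∂μ = 1) :
    IsProbabilityMeasure (μ.withDensity fun x => ENNReal.ofReal (q x)) := by
  have hq : Integrable q μ := .of_integral_ne_zero (by rw [hq1]; exact one_ne_zero)
  constructor
  rw [withDensity_apply _ MeasurableSet.univ, Measure.restrict_univ,
    ← ofReal_integral_eq_lintegral_ofReal hq (ae_of_all _ hq0), hq1, ENNReal.ofReal_one]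

lemma integral_withDensity_ofReal (hq : Measurable q) (hq0 : ∀ x, 0 ≤ q x) (h : X → ℝ) :
    ∫ x, h x ∂μ.withDensity (fun x => ENNReal.ofReal (q x)) = ∫ x, h x * q x ∂μ := by
  rw [integral_withDensity_eq_integral_toReal_smul hq.ennreal_ofReal
    (ae_of_all _ fun _ => ENNReal.ofReal_lt_top)]
  simp only [ENNReal.toReal_ofReal (hq0 _), smul_eq_mul, mul_comm]

lemma withDensity_ofReal_mul_div_integral (hq : Measurable q) (hq0 : ∀ x, 0 ≤ q x)
    {h : X → ℝ} (hh : Measurable h) :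
    μ.withDensity (fun x => ENNReal.ofReal (h x * q x / ∫ x', h x' * q x' ∂μ)) =
      (μ.withDensity fun x => ENNReal.ofReal (q x)).withDensity fun x =>
        ENNReal.ofReal (h x / ∫ x', h x' ∂μ.withDensity fun x => ENNReal.ofReal (q x)) := by
  rw [integral_withDensity_ofReal hq hq0, ← withDensity_mul _ hq.ennreal_ofReal
    (hh.div_const _).ennreal_ofReal]
  congr 1
  ext x
  rw [Pi.mul_apply, mul_div_right_comm, ENNReal.ofReal_mul' (hq0 x), mul_comm]

lemma toReal_withDensity_ofReal_apply {p : X → ℝ} (hp : Integrable p μ) (hp0 : 0 ≤ᵐ[μ] p)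
    {s : Set X} (hs : MeasurableSet s) :
    ((μ.withDensity fun x => ENNReal.ofReal (p x)) s).toReal = ∫ x in s, p x ∂μ := by
  rw [withDensity_apply _ hs, ← ofReal_integral_eq_lintegral_ofReal hp.integrableOn
    (ae_restrict_of_ae hp0), ENNReal.toReal_ofReal (setIntegral_nonneg_of_ae_restrict
    (ae_restrict_of_ae hp0))]

theorem tvDist_withDensity_ofReal_le {p q : X → ℝ} (hp : Integrable p μ) (hq : Integrable q μ)
    (hp0 : 0 ≤ᵐ[μ] p) (hq0 : 0 ≤ᵐ[μ] q) :
    tvDist (μ.withDensity fun x => ENNReal.ofReal (p x))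
      (μ.withDensity fun x => ENNReal.ofReal (q x)) ≤ ∫ x, |p x - q x| ∂μ := by
  refine ciSup_le fun ⟨s, hs⟩ => ?_
  rw [toReal_withDensity_ofReal_apply hp hp0 hs, toReal_withDensity_ofReal_apply hq hq0 hs,
    ← integral_sub hp.integrableOn hq.integrableOn]
  exact abs_integral_le_integral_abs.trans
    (setIntegral_le_integral (hp.sub hq).abs (ae_of_all _ fun _ => abs_nonneg _))

end Density

theorem integral_abs_div_integral_sub_le {X : Type*} [MeasurableSpace X] {μ : Measure X}
    {f g : X → ℝ} (hf : Integrable f μ) (hg : Integrable g μ) (hf0 : 0 ≤ᵐ[μ] f)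
    (hZf : 0 < ∫ x, f x ∂μ) (hZg : 0 < ∫ x, g x ∂μ) :
    ∫ x, |g x / ∫ x, g x ∂μ - f x / ∫ x, f x ∂μ| ∂μ ≤ 2 * (∫ x, |g x - f x| ∂μ) / ∫ x, g x ∂μ := by
  set Zf := ∫ x, f x ∂μ
  set Zg := ∫ x, g x ∂μ
  have hZ : |Zf - Zg| ≤ ∫ x, |g x - f x| ∂μ := by
    rw [abs_sub_comm, ← integral_sub hg hf]
    exact abs_integral_le_integral_abs
  have hpt : ∀ᵐ x ∂μ, |g x / Zg - f x / Zf| ≤ |g x - f x| / Zg + f x / Zf * (|Zf - Zg| / Zg) := by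
    filter_upwards [hf0] with x hx
    have : g x / Zg - f x / Zf = (g x - f x) / Zg + f x / Zf * ((Zf - Zg) / Zg) := by
      field_simp
      ring
    rw [this]
    refine (abs_add_le _ _).trans_eq ?_
    rw [abs_div, abs_of_pos hZg, abs_mul, abs_div, abs_div, abs_of_pos hZg, abs_of_pos hZf,
      abs_of_nonneg hx]
  have hdiff : Integrable (fun x => |g x - f x| / Zg) μ := (hg.sub hf).abs.div_const _
  have hfZ : Integrable (fun x => f x / Zf * (|Zf - Zg| / Zg)) μ := (hf.div_const _).mul_const _
  calc ∫ x, |g x / Zg - f x / Zf| ∂μ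
      ≤ ∫ x, (|g x - f x| / Zg + f x / Zf * (|Zf - Zg| / Zg)) ∂μ :=
        integral_mono_ae ((hg.div_const _).sub (hf.div_const _)).abs (hdiff.add hfZ) hpt
    _ = (∫ x, |g x - f x| ∂μ) / Zg + |Zf - Zg| / Zg := by
        rw [integral_add hdiff hfZ,
          integral_div, integral_mul_const, integral_div, div_self hZf.ne', one_mul]
    _ ≤ 2 * (∫ x, |g x - f x| ∂μ) / Zg := by
        rw [two_mul, add_div]
        gcongr

section Probability

variable {X : Type*} [MeasurableSpace X] {P : Measure X} [IsProbabilityMeasure P]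

lemma abs_integral_sub_le_of_ae_abs_sub_le {h : X → ℝ} (hh : Integrable h P) {b δ : ℝ}
    (hδ : ∀ᵐ x ∂P, |h x - b| ≤ δ) : |∫ x, h x ∂P - b| ≤ δ := by
  have hb : b = ∫ _, b ∂P := by simp
  rw [hb, ← integral_sub hh (integrable_const b)]
  have := norm_integral_le_of_norm_le_const (f := fun x => h x - b)
    (by simpa only [Real.norm_eq_abs] using hδ)
  rwa [probReal_univ, mul_one] at this

lemma LipschitzOnWith.abs_integral_comp_sub_le {E : Type*} [PseudoMetricSpace E] {φ : E → ℝ}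
    {L : NNReal} {s : Set E} (hφ : LipschitzOnWith L φ s) {v : X → E}
    (hint : Integrable (fun x => φ (v x)) P) {w : E} (hw : w ∈ s) {ε : ℝ}
    (hv : ∀ᵐ x ∂P, v x ∈ s ∧ dist (v x) w ≤ ε) : |∫ x, φ (v x) ∂P - φ w| ≤ L * ε := by
  refine abs_integral_sub_le_of_ae_abs_sub_le hint ?_
  filter_upwards [hv] with x ⟨hxs, hxw⟩
  rw [← Real.dist_eq]
  exact (hφ.dist_le_mul _ hxs _ hw).trans (mul_le_mul_of_nonneg_left hxw L.coe_nonneg)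

theorem tvDist_withDensity_normalized_le {f g : X → ℝ} {c δ : ℝ} (hf : Integrable f P)
    (hg : Integrable g P) (hg0 : 0 ≤ᵐ[P] g) (hc : 0 < c) (hcf : ∀ᵐ x ∂P, c ≤ f x)
    (hgf : ∀ᵐ x ∂P, |g x - f x| ≤ δ) (hδ : 2 * δ ≤ c) :
    tvDist (P.withDensity fun x => ENNReal.ofReal (g x / ∫ x, g x ∂P))
      (P.withDensity fun x => ENNReal.ofReal (f x / ∫ x, f x ∂P)) ≤ 4 / c * δ := by
  have hL1 : ∫ x, |g x - f x| ∂P ≤ δ := by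
    simpa using integral_mono_ae (hg.sub hf).abs (integrable_const δ) hgf
  have hZf : c ≤ ∫ x, f x ∂P := by
    simpa using integral_mono_ae (integrable_const c) hf hcf
  have hZg : c / 2 ≤ ∫ x, g x ∂P := by
    have : |∫ x, g x ∂P - ∫ x, f x ∂P| ≤ ∫ x, |g x - f x| ∂P := by
      rw [← integral_sub hg hf]
      exact abs_integral_le_integral_abs
    linarith [neg_abs_le (∫ x, g x ∂P - ∫ x, f x ∂P)]
  have hf0 : 0 ≤ᵐ[P] f := by
    filter_upwards [hcf] with x hx using hc.le.trans hx
  calc _ ≤ ∫ x, |g x / ∫ x, g x ∂P - f x / ∫ x, f x ∂P| ∂P := by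
        refine tvDist_withDensity_ofReal_le (hg.div_const _) (hf.div_const _) ?_ ?_
        · filter_upwards [hg0] with x hx using div_nonneg hx (by linarith)
        · filter_upwards [hf0] with x hx using div_nonneg hx (by linarith)
    _ ≤ 2 * (∫ x, |g x - f x| ∂P) / ∫ x, g x ∂P :=
        integral_abs_div_integral_sub_le hf hg hf0 (by linarith) (by linarith)
    _ ≤ 2 * δ / (c / 2) := by
        have hδ0 : 0 ≤ δ := (integral_nonneg fun _ => abs_nonneg _).trans hL1
        exact div_le_div₀ (by positivity) (by linarith) (by positivity) hZg
    _ = 4 / c * δ := by field_simp; ring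

end Probability

theorem stmt0_general {m d D : ℕ} (Γ : Matrix (Fin m) (Fin m) ℝ) (hΓ : Γ.PosDef)
    (y : EuclideanSpace ℝ (Fin m))
    (qu : EuclideanSpace ℝ (Fin d) → ℝ)
    (hqum : Measurable qu) (hqu0 : ∀ u, 0 ≤ qu u) (hqu1 : ∫ u, qu u = 1)
    (A : Set (EuclideanSpace ℝ (Fin D)))
    (qa : EuclideanSpace ℝ (Fin D) → ℝ)
    (hqam : Measurable qa) (hqa0 : ∀ a, 0 ≤ qa a) (hqa1 : ∫ a in A, qa a = 1)
    (G : EuclideanSpace ℝ (Fin d) → EuclideanSpace ℝ (Fin m)) (hG : Measurable G)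
    (R : ℝ) (hGbd : ∀ u, ‖G u‖ ≤ R) :
    ∃ C > (0 : ℝ), ∃ ε₀ > (0 : ℝ),
      ∀ (Ga : EuclideanSpace ℝ (Fin D) → EuclideanSpace ℝ (Fin d) → EuclideanSpace ℝ (Fin m)),
        Measurable (fun p : EuclideanSpace ℝ (Fin d) × EuclideanSpace ℝ (Fin D) =>
          Ga p.2 p.1) →
      ∀ (ε : ℝ), 0 < ε → ε ≤ ε₀ →
        (∀ᵐ p ∂((volume.withDensity fun u => ENNReal.ofReal (qu u)).prod
            ((volume.restrict A).withDensity fun a => ENNReal.ofReal (qa a))),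
          ‖Ga p.2 p.1 - G p.1‖ < ε) →
        tvDist
          (volume.withDensity fun u => ENNReal.ofReal
            (((∫ a in A, Real.exp (-(1/2) * wSq Γ (y - Ga a u)) * qa a) * qu u) /
              (∫ u', (∫ a in A, Real.exp (-(1/2) * wSq Γ (y - Ga a u')) * qa a) * qu u')))
          (volume.withDensity fun u => ENNReal.ofReal
            ((Real.exp (-(1/2) * wSq Γ (y - G u)) * qu u) /
              (∫ u', Real.exp (-(1/2) * wSq Γ (y - G u')) * qu u')))
          ≤ C * ε := by
  set Pu := volume.withDensity fun u => ENNReal.ofReal (qu u)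
  set Pa := (volume.restrict A).withDensity fun a => ENNReal.ofReal (qa a)
  have : IsProbabilityMeasure Pu := isProbabilityMeasure_withDensity_ofReal hqu0 hqu1
  have : IsProbabilityMeasure Pa := isProbabilityMeasure_withDensity_ofReal hqa0 hqa1
  have hmem {v : EuclideanSpace ℝ (Fin m)} (u) (hv : ‖v - G u‖ ≤ 1) :
      y - v ∈ closedBall 0 (‖y‖ + R + 1) := by
    rw [mem_closedBall_zero_iff]
    linarith [norm_sub_le y v, norm_le_norm_add_norm_sub' v (G u), hGbd u]
  obtain ⟨c, hc, hcΦ⟩ := exists_pos_le_gaussianLikelihood Γ (‖y‖ + R + 1)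
  obtain ⟨L, hL, hLΦ⟩ := exists_lipschitzOnWith_gaussianLikelihood Γ (‖y‖ + R + 1)
  refine ⟨4 / c * L, by positivity, min 1 (c / (2 * L)), by positivity,
    fun Ga hGa ε hε hεε₀ hae => ?_⟩
  have hε1 : ε ≤ 1 := hεε₀.trans (min_le_left _ _)
  have hLε : 2 * (L * ε) ≤ c := by
    linarith [(le_div_iff₀ (by positivity)).1 (hεε₀.trans (min_le_right _ _))]
  have hgm : Measurable fun u => ∫ a, gaussianLikelihood Γ (y - Ga a u) ∂Pa :=
    (StronglyMeasurable.integral_prod_right' ((measurable_gaussianLikelihood Γ).comp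
      (measurable_const.sub hGa)).stronglyMeasurable).measurable
  have hfm : Measurable fun u => gaussianLikelihood Γ (y - G u) :=
    (measurable_gaussianLikelihood Γ).comp (measurable_const.sub hG)
  have hclose : ∀ᵐ u ∂Pu, |∫ a, gaussianLikelihood Γ (y - Ga a u) ∂Pa
      - gaussianLikelihood Γ (y - G u)| ≤ L * ε := by
    filter_upwards [Measure.ae_ae_of_ae_prod hae] with u hu
    have hv : Measurable fun a => y - Ga a u :=
      measurable_const.sub (hGa.comp measurable_prodMk_left)
    refine hLΦ.abs_integral_comp_sub_le (integrable_gaussianLikelihood_comp hΓ hv)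
      (hmem u (by simp)) ?_
    filter_upwards [hu] with a ha
    rw [dist_sub_left, dist_eq_norm]
    exact ⟨hmem u (ha.le.trans hε1), ha.le⟩
  -- view both posteriors as densities with respect to the prior `Pu`
  simp only [← gaussianLikelihood.eq_1, ← integral_withDensity_ofReal hqam hqa0]
  rw [withDensity_ofReal_mul_div_integral hqum hqu0 hgm,
    withDensity_ofReal_mul_div_integral hqum hqu0 hfm]
  refine (tvDist_withDensity_normalized_le
    (integrable_gaussianLikelihood_comp hΓ (measurable_const.sub hG))
    (.of_bound hgm.aestronglyMeasurable 1
      (ae_of_all _ fun u => norm_integral_gaussianLikelihood_le_one hΓ _))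
    (ae_of_all _ fun u => integral_nonneg fun a => (gaussianLikelihood_pos Γ _).le) hc
    (ae_of_all _ fun u => hcΦ _ (hmem u (by simp))) hclose hLε).trans_eq (by ring)

/-- Well-posedness of the marginal approximate posterior (finite-dimensional, density-based
version).  With idealized posterior density `p_{u|y}(u) ∝ exp(-(1/2)‖y-G(u)‖_Γ²) q_u(u)` and
marginal approximate posterior density
`q_{u|y}(u) ∝ (∫_A exp(-(1/2)‖y-Gᵃ(u)‖_Γ²) q_a(a) da) q_u(u)`, if `G` is bounded then there are
`C > 0` and `ε₀ > 0` (independent of `ε` and of the family `{Gᵃ}`) such that for all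
`0 < ε ≤ ε₀`, if `‖Gᵃ(u) - G(u)‖ < ε` for `(q_u ⊗ q_a)`-a.e. `(u,a)`, then the total variation
distance between the two posteriors is at most `C ε`. -/
theorem stmt0 {m d D : ℕ} (Γ : Matrix (Fin m) (Fin m) ℝ) (hΓ : Γ.PosDef)
    (y : EuclideanSpace ℝ (Fin m))
    (qu : EuclideanSpace ℝ (Fin d) → ℝ)
    (hqum : Measurable qu) (hqu0 : ∀ u, 0 ≤ qu u) (hqu1 : ∫ u, qu u = 1)
    (A : Set (EuclideanSpace ℝ (Fin D))) (hA : MeasurableSet A)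
    (qa : EuclideanSpace ℝ (Fin D) → ℝ)
    (hqam : Measurable qa) (hqa0 : ∀ a, 0 ≤ qa a) (hqa1 : ∫ a in A, qa a = 1)
    (G : EuclideanSpace ℝ (Fin d) → EuclideanSpace ℝ (Fin m)) (hG : Measurable G)
    (R : ℝ) (hGbd : ∀ u, ‖G u‖ ≤ R) :
    ∃ C > (0 : ℝ), ∃ ε₀ > (0 : ℝ),
      ∀ (Ga : EuclideanSpace ℝ (Fin D) → EuclideanSpace ℝ (Fin d) → EuclideanSpace ℝ (Fin m)),
        Measurable (fun p : EuclideanSpace ℝ (Fin d) × EuclideanSpace ℝ (Fin D) =>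
          Ga p.2 p.1) →
      ∀ (ε : ℝ), 0 < ε → ε ≤ ε₀ →
        (∀ᵐ p ∂((volume.withDensity fun u => ENNReal.ofReal (qu u)).prod
            ((volume.restrict A).withDensity fun a => ENNReal.ofReal (qa a))),
          ‖Ga p.2 p.1 - G p.1‖ < ε) →
        tvDist
          (volume.withDensity fun u => ENNReal.ofReal
            (((∫ a in A, Real.exp (-(1/2) * wSq Γ (y - Ga a u)) * qa a) * qu u) /
              (∫ u', (∫ a in A, Real.exp (-(1/2) * wSq Γ (y - Ga a u')) * qa a) * qu u')))
          (volume.withDensity fun u => ENNReal.ofReal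
            ((Real.exp (-(1/2) * wSq Γ (y - G u)) * qu u) /
              (∫ u', Real.exp (-(1/2) * wSq Γ (y - G u')) * qu u')))
          ≤ C * ε :=
  stmt0_general Γ hΓ y qu hqum hqu0 hqu1 A qa hqam hqa0 hqa1 G hG R hGbd
end

section
/- Define g_y(u) := exp(-(1/2)‖y - G(u)‖_Γ²) and g̃_y(u) := ∫_A exp(-(1/2)‖y - G^a(u)‖_Γ²) dν_a(a). There exists a constant C > 0, depending only on Γ but not on ε, y, u or the family {G^a}, such that for every ε > 0 and every u ∈ U: if ‖G^a(u) - G(u)‖ < ε for ν_a-almost every a ∈ A, then |g̃_y(u) - g_y(u)| ≤ Cε. -/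
open MeasureTheory Matrix

/-!
Writing `Γ⁻¹ = S²` with `S = Γ^{-1/2}` symmetric, `‖x‖_Γ² = ‖S x‖²`, so
`x ↦ exp(-(1/2)‖x‖_Γ²)` is the composition of `t ↦ exp(-t²/2)`, which is `1`-Lipschitz since
`|t| e^{-t²/2} ≤ 1`, with the `‖S‖`-Lipschitz map `x ↦ ‖S x‖`. Hence the integrand of `g̃_y(u)`
differs from `g_y(u)` by at most `‖S‖ ε` almost everywhere, and integrating against the
probability measure `ν_a` gives the bound with `C = ‖S‖ + 1`.
-/

open scoped NNReal

lemma abs_mul_exp_neg_half_sq_le_one (x : ℝ) : |x| * Real.exp (-(1/2) * x ^ 2) ≤ 1 := by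
  have h : |x| ≤ Real.exp (x ^ 2 / 2) := by
    nlinarith [Real.add_one_le_exp (x ^ 2 / 2), sq_nonneg (|x| - 1), sq_abs x]
  rwa [show -(1/2) * x ^ 2 = -(x ^ 2 / 2) by ring, Real.exp_neg, ← div_eq_mul_inv,
    div_le_one (Real.exp_pos _)]

lemma lipschitzWith_exp_neg_half_sq : LipschitzWith 1 fun t : ℝ => Real.exp (-(1/2) * t ^ 2) := by
  have hderiv (x : ℝ) : HasDerivAt (fun t : ℝ => Real.exp (-(1/2) * t ^ 2))
      (Real.exp (-(1/2) * x ^ 2) * (-(1/2) * (2 * x))) x :=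
    (by simpa using (hasDerivAt_pow 2 x).const_mul (-(1/2) : ℝ) :
      HasDerivAt (fun t : ℝ => -(1/2) * t ^ 2) (-(1/2) * (2 * x)) x).exp
  refine lipschitzWith_of_nnnorm_deriv_le (fun x => (hderiv x).differentiableAt) fun x => ?_
  rw [← NNReal.coe_le_coe, coe_nnnorm, (hderiv x).deriv, Real.norm_eq_abs, NNReal.coe_one]
  calc |Real.exp (-(1/2) * x ^ 2) * (-(1/2) * (2 * x))|
      = |x| * Real.exp (-(1/2) * x ^ 2) := by
        rw [abs_mul, abs_of_pos (Real.exp_pos _), show -(1/2) * (2 * x) = -x by ring, abs_neg,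
          mul_comm]
    _ ≤ 1 := abs_mul_exp_neg_half_sq_le_one x

open scoped MatrixOrder in
lemma exists_wSq_eq_norm_sq {m : ℕ} {Γ : Matrix (Fin m) (Fin m) ℝ} (hΓ : Γ⁻¹.PosSemidef) :
    ∃ T : EuclideanSpace ℝ (Fin m) →L[ℝ] EuclideanSpace ℝ (Fin m), ∀ v, wSq Γ v = ‖T v‖ ^ 2 := by
  set S := CFC.sqrt Γ⁻¹
  have hS : Sᵀ = S := (CFC.sqrt_nonneg Γ⁻¹).posSemidef.isHermitian
  have hSS : S * S = Γ⁻¹ := CFC.sqrt_mul_sqrt_self _ hΓ.nonneg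
  refine ⟨(toEuclideanLin S).toContinuousLinearMap, fun v => ?_⟩
  rw [EuclideanSpace.real_norm_sq_eq]
  change _ = ∑ i, (S *ᵥ (fun i => v i)) i ^ 2
  rw [wSq, ← hSS, ← mulVec_mulVec, dotProduct_mulVec, ← mulVec_transpose, hS]
  simp only [dotProduct, sq]

lemma exists_lipschitzWith_exp_neg_half_wSq {m : ℕ} {Γ : Matrix (Fin m) (Fin m) ℝ}
    (hΓ : Γ⁻¹.PosSemidef) :
    ∃ K : ℝ≥0, LipschitzWith K fun v => Real.exp (-(1/2) * wSq Γ v) := by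
  obtain ⟨T, hT⟩ := exists_wSq_eq_norm_sq hΓ
  simp_rw [hT]
  exact ⟨_, lipschitzWith_exp_neg_half_sq.comp (lipschitzWith_one_norm.comp T.lipschitz)⟩

lemma LipschitzWith.abs_integral_comp_sub_le {Ω E : Type*} [MeasurableSpace Ω]
    [SeminormedAddCommGroup E] {μ : Measure Ω} [IsProbabilityMeasure μ] {K : ℝ≥0} {f : E → ℝ}
    (hf : LipschitzWith K f) {X : Ω → E} (hX : AEStronglyMeasurable X μ) {x : E} {ε : ℝ}
    (hXx : ∀ᵐ ω ∂μ, ‖X ω - x‖ ≤ ε) :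
    |∫ ω, f (X ω) ∂μ - f x| ≤ K * ε := by
  have hbound : ∀ᵐ ω ∂μ, ‖f (X ω) - f x‖ ≤ K * ε :=
    hXx.mono fun ω hω => (hf.norm_sub_le _ _).trans (by gcongr)
  have hint : Integrable (fun ω => f (X ω) - f x) μ :=
    .of_bound ((hf.continuous.comp_aestronglyMeasurable hX).sub aestronglyMeasurable_const) _ hbound
  have hsub : ∫ ω, f (X ω) ∂μ - f x = ∫ ω, (f (X ω) - f x) ∂μ := by
    have hfX : Integrable (fun ω => f (X ω)) μ := by
      simpa only [sub_eq_add_neg, integrable_add_const_iff] using hint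
    rw [integral_sub hfX (integrable_const _), integral_const, probReal_univ, one_smul]
  simpa [hsub] using norm_integral_le_of_norm_le_const hbound

/-- With `g_y(u) = exp(-(1/2)‖y - G(u)‖_Γ²)` and
`g̃_y(u) = ∫_A exp(-(1/2)‖y - Gᵃ(u)‖_Γ²) dν_a(a)`, there is a constant `C > 0` depending only on
`Γ` (not on `ε`, `y`, `u`, `ν_a` or the family `{Gᵃ}`) such that whenever
`‖Gᵃ(u) - G(u)‖ < ε` for `ν_a`-a.e. `a`, we have `|g̃_y(u) - g_y(u)| ≤ C ε`. -/
theorem stmt4 {m : ℕ} (Γ : Matrix (Fin m) (Fin m) ℝ) (hΓ : Γ.PosDef)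
    {U A : Type*} [MeasurableSpace U] [MeasurableSpace A] :
    ∃ C > (0 : ℝ),
      ∀ (νa : Measure A), IsProbabilityMeasure νa →
      ∀ (G : U → EuclideanSpace ℝ (Fin m)) (Ga : A → U → EuclideanSpace ℝ (Fin m)),
        Measurable G → Measurable (fun p : U × A => Ga p.2 p.1) →
      ∀ (ε : ℝ), 0 < ε → ∀ (y : EuclideanSpace ℝ (Fin m)) (u : U),
        (∀ᵐ a ∂νa, ‖Ga a u - G u‖ < ε) →
        |(∫ a, Real.exp (-(1/2) * wSq Γ (y - Ga a u)) ∂νa)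
            - Real.exp (-(1/2) * wSq Γ (y - G u))| ≤ C * ε := by
  obtain ⟨K, hK⟩ := exists_lipschitzWith_exp_neg_half_wSq hΓ.inv.posSemidef
  refine ⟨K + 1, by positivity, fun νa _ G Ga _ hGa ε _ y u hclose => ?_⟩
  have hmeas : Measurable fun a => y - Ga a u :=
    measurable_const.sub (hGa.comp measurable_prodMk_left)
  have hclose' : ∀ᵐ a ∂νa, ‖(y - Ga a u) - (y - G u)‖ ≤ ε := hclose.mono fun a ha => by
    rw [sub_sub_sub_cancel_left, norm_sub_rev]
    exact ha.le
  exact_mod_cast (hK.weaken (le_add_of_nonneg_right zero_le_one)).abs_integral_comp_sub_le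
    hmeas.aestronglyMeasurable hclose'
end

section
/- Define the normalizing constants Z := ∫_U exp(-(1/2)‖y - G(u)‖_Γ²) dμ_u(u) and Z̃ := ∫_{U×A} exp(-(1/2)‖y - G^a(u)‖_Γ²) d(μ_u ⊗ ν_a)(u,a). There exists a constant C > 0, depending only on Γ and not on ε, y, or the maps G, {G^a}, such that for every ε > 0: if ‖G^a(u) - G(u)‖ < ε for (μ_u ⊗ ν_a)-almost every (u,a), then |Z̃ - Z| ≤ Cε. -/
/-!
With `L` the symmetric square root of `Γ⁻¹`, `wSq Γ v = ‖L v‖²`, so the likelihood is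
`F v = exp (-(1/2) * ‖L v‖²)`. Since `|t| ≤ exp (t²/2)`, the profile `t ↦ exp (-t²/2)` is
`1`-Lipschitz, hence `F` is bounded by `1` and `‖L‖`-Lipschitz. Reading `Z` as an integral over
`U × A` of a function of `u` alone, `|Z̃ - Z| ≤ ∫ |F (y - Gᵃ u) - F (y - G u)| ≤ ‖L‖ ε`.
-/

open MeasureTheory Matrix
open scoped NNReal MatrixOrder

theorem Matrix.PosSemidef.dotProduct_mulVec_self_eq_norm_sq {n : Type*} [Fintype n]
    [DecidableEq n] {M : Matrix n n ℝ} (hM : M.PosSemidef) (v : EuclideanSpace ℝ n) :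
    v.ofLp ⬝ᵥ M *ᵥ v.ofLp = ‖toEuclideanCLM (𝕜 := ℝ) (CFC.sqrt M) v‖ ^ 2 := by
  have hS : (CFC.sqrt M)ᵀ = CFC.sqrt M := (CFC.sqrt_nonneg M).posSemidef.isHermitian.eq
  conv_lhs => rw [← CFC.sqrt_mul_sqrt_self M hM.nonneg, ← mulVec_mulVec, dotProduct_mulVec,
    ← mulVec_transpose, hS]
  rw [EuclideanSpace.norm_sq_eq]
  simp only [ofLp_toEuclideanCLM, Real.norm_eq_abs, sq, abs_mul_abs_self, dotProduct]

theorem lipschitzWith_one_exp_neg_half_mul_sq :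
    LipschitzWith 1 (fun t : ℝ => Real.exp (-(1/2) * t ^ 2)) := by
  have hderiv (t : ℝ) : HasDerivAt (fun t : ℝ => Real.exp (-(1/2) * t ^ 2))
      (Real.exp (-(1/2) * t ^ 2) * -t) t := by
    simpa using ((hasDerivAt_pow 2 t).const_mul (-(1/2) : ℝ)).exp
  refine lipschitzWith_of_nnnorm_deriv_le (fun t => (hderiv t).differentiableAt) fun t => ?_
  rw [(hderiv t).deriv, ← NNReal.coe_le_coe, coe_nnnorm, NNReal.coe_one, norm_mul, norm_neg,
    Real.norm_of_nonneg (Real.exp_pos _).le, Real.norm_eq_abs]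
  have habs : |t| ≤ Real.exp ((1/2) * t ^ 2) := by
    nlinarith [Real.add_one_le_exp ((1/2) * t ^ 2), sq_abs t, sq_nonneg (|t| - 1)]
  calc Real.exp (-(1/2) * t ^ 2) * |t|
      ≤ Real.exp (-(1/2) * t ^ 2) * Real.exp ((1/2) * t ^ 2) := by gcongr
    _ = 1 := by rw [← Real.exp_add]; ring_nf; exact Real.exp_zero

theorem lipschitzWith_exp_neg_half_mul_norm_sq {E F : Type*} [SeminormedAddCommGroup E]
    [NormedSpace ℝ E] [SeminormedAddCommGroup F] [NormedSpace ℝ F] (L : E →L[ℝ] F) :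
    LipschitzWith ‖L‖₊ (fun v => Real.exp (-(1/2) * ‖L v‖ ^ 2)) := by
  simpa [Function.comp_def] using
    lipschitzWith_one_exp_neg_half_mul_sq.comp (lipschitzWith_one_norm.comp L.lipschitz)

theorem abs_integral_comp_sub_integral_comp_le {X E : Type*} [MeasurableSpace X]
    [PseudoMetricSpace E] {μ : Measure X} [IsFiniteMeasure μ] {F : E → ℝ} {K : ℝ≥0} {B ε : ℝ}
    (hF : LipschitzWith K F) (hFB : ∀ v, |F v| ≤ B) {f g : X → E}
    (hf : AEStronglyMeasurable f μ) (hg : AEStronglyMeasurable g μ)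
    (hfg : ∀ᵐ x ∂μ, dist (f x) (g x) ≤ ε) :
    |∫ x, F (f x) ∂μ - ∫ x, F (g x) ∂μ| ≤ K * ε * μ.real Set.univ := by
  have hint {h : X → E} (hh : AEStronglyMeasurable h μ) : Integrable (fun x => F (h x)) μ :=
    .of_bound (hF.continuous.comp_aestronglyMeasurable hh) B (.of_forall fun _ => hFB _)
  rw [← integral_sub (hint hf) (hint hg), ← Real.norm_eq_abs]
  refine norm_integral_le_of_norm_le_const ?_
  filter_upwards [hfg] with x hx
  calc ‖F (f x) - F (g x)‖ = dist (F (f x)) (F (g x)) := (dist_eq_norm _ _).symm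
    _ ≤ K * dist (f x) (g x) := hF.dist_le_mul _ _
    _ ≤ K * ε := by gcongr

/-- Stability of the normalizing constants: with
`Z = ∫_U exp(-(1/2)‖y - G(u)‖_Γ²) dμ_u` and
`Z̃ = ∫_{U×A} exp(-(1/2)‖y - Gᵃ(u)‖_Γ²) d(μ_u ⊗ ν_a)`, there is a constant `C > 0` depending
only on `Γ` (not on `ε`, `y`, or the maps `G`, `{Gᵃ}`) such that whenever
`‖Gᵃ(u) - G(u)‖ < ε` for `(μ_u ⊗ ν_a)`-a.e. `(u,a)`, we have `|Z̃ - Z| ≤ C ε`. -/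
theorem stmt6 {m : ℕ} (Γ : Matrix (Fin m) (Fin m) ℝ) (hΓ : Γ.PosDef)
    {U A : Type*} [MeasurableSpace U] [MeasurableSpace A] :
    ∃ C > (0 : ℝ),
      ∀ (μu : Measure U) (νa : Measure A),
        IsProbabilityMeasure μu → IsProbabilityMeasure νa →
      ∀ (G : U → EuclideanSpace ℝ (Fin m)) (Ga : A → U → EuclideanSpace ℝ (Fin m)),
        Measurable G → Measurable (fun p : U × A => Ga p.2 p.1) →
      ∀ (y : EuclideanSpace ℝ (Fin m)) (ε : ℝ), 0 < ε →
        (∀ᵐ p ∂(μu.prod νa), ‖Ga p.2 p.1 - G p.1‖ < ε) →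
        |(∫ p, Real.exp (-(1/2) * wSq Γ (y - Ga p.2 p.1)) ∂(μu.prod νa))
            - (∫ u, Real.exp (-(1/2) * wSq Γ (y - G u)) ∂μu)| ≤ C * ε := by
  set L := toEuclideanCLM (𝕜 := ℝ) (CFC.sqrt Γ⁻¹)
  have hwSq (v) : wSq Γ v = ‖L v‖ ^ 2 := hΓ.inv.posSemidef.dotProduct_mulVec_self_eq_norm_sq v
  have hFB (v : EuclideanSpace ℝ (Fin m)) : |Real.exp (-(1/2) * ‖L v‖ ^ 2)| ≤ 1 := by
    rw [abs_of_pos (Real.exp_pos _), Real.exp_le_one_iff]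
    nlinarith [sq_nonneg ‖L v‖]
  refine ⟨‖L‖ + 1, by positivity, fun μu νa _ _ G Ga hG hGa y ε hε hae => ?_⟩
  have hZ : ∫ u, Real.exp (-(1/2) * ‖L (y - G u)‖ ^ 2) ∂μu
      = ∫ p, Real.exp (-(1/2) * ‖L (y - G p.1)‖ ^ 2) ∂(μu.prod νa) := by
    rw [integral_fun_fst (fun u => Real.exp (-(1/2) * ‖L (y - G u)‖ ^ 2)), probReal_univ,
      one_smul]
  have hdist : ∀ᵐ p ∂(μu.prod νa), dist (y - Ga p.2 p.1) (y - G p.1) ≤ ε := by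
    filter_upwards [hae] with p hp
    rw [dist_sub_left, dist_eq_norm]
    exact hp.le
  simp only [hwSq]
  rw [hZ]
  calc _ ≤ ‖L‖₊ * ε * (μu.prod νa).real Set.univ :=
        abs_integral_comp_sub_integral_comp_le (lipschitzWith_exp_neg_half_mul_norm_sq L) hFB
          (measurable_const.sub hGa).aestronglyMeasurable
          (measurable_const.sub (hG.comp measurable_fst)).aestronglyMeasurable hdist
    _ ≤ (‖L‖ + 1) * ε := by simp only [probReal_univ, mul_one, coe_nnnorm]; gcongr; linarith
end

section
/- Let π be a probability measure on a measurable space X and let g₁, g₂ : X → (0, 1] be measurable with Z_i := ∫ g_i dπ for i = 1, 2 and Z₁ > 0. Let μ_i be the probability measure with dμ_i/dπ = g_i / Z_i. Then there exist constants C > 0 and ε₀ > 0, depending only on Z₁, such that for every 0 < ε ≤ ε₀, if |g₁(x) - g₂(x)| ≤ ε for π-almost every x, then d_TV(μ₁, μ₂) ≤ Cε. -/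
open MeasureTheory

lemma abs_int_le_int_abs {α : Type*} [MeasurableSpace α] (μ : Measure α) (f : α → ℝ) :
    |∫ x, f x ∂μ| ≤ ∫ x, |f x| ∂μ := by
  simpa [Real.norm_eq_abs] using norm_integral_le_integral_norm (μ := μ) f

/-- Stability of normalized Bayesian posteriors in total variation under uniform
perturbations of the (unnormalized) likelihood: if `μᵢ` has density `gᵢ/Zᵢ` with respect to a
probability measure `π`, with `gᵢ : X → (0,1]` and `Z₁ = ∫ g₁ dπ > 0`, then there are
`C > 0` and `ε₀ > 0` (depending only on `Z₁`) such that for all `0 < ε ≤ ε₀`, if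
`|g₁ - g₂| ≤ ε` `π`-a.e., then `d_TV(μ₁, μ₂) ≤ C ε`. -/
theorem stmt7 {X : Type*} [MeasurableSpace X] (π : Measure X) [IsProbabilityMeasure π]
    (g₁ : X → ℝ) (hg₁m : Measurable g₁) (hg₁pos : ∀ x, 0 < g₁ x) (hg₁le : ∀ x, g₁ x ≤ 1)
    (hZ₁ : 0 < ∫ x, g₁ x ∂π) :
    ∃ C > 0, ∃ ε₀ > 0,
      ∀ (g₂ : X → ℝ), Measurable g₂ → (∀ x, 0 < g₂ x) → (∀ x, g₂ x ≤ 1) →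
      ∀ ε : ℝ, 0 < ε → ε ≤ ε₀ →
      (∀ᵐ x ∂π, |g₁ x - g₂ x| ≤ ε) →
      tvDist (π.withDensity fun x => ENNReal.ofReal (g₁ x / ∫ z, g₁ z ∂π))
             (π.withDensity fun x => ENNReal.ofReal (g₂ x / ∫ z, g₂ z ∂π)) ≤ C * ε := by
  set Z₁ := ∫ x, g₁ x ∂π with hZ₁def
  refine ⟨1/Z₁ + 2/Z₁^2, by positivity, Z₁/2, by positivity, ?_⟩
  intro g₂ hg₂m hg₂pos hg₂le ε hε hεle hae
  set Z₂ := ∫ x, g₂ x ∂π with hZ₂def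
  have hg₁int : Integrable g₁ π :=
    (integrable_const (1:ℝ)).mono' hg₁m.aestronglyMeasurable
      (Filter.Eventually.of_forall fun x => by
        rw [Real.norm_eq_abs, abs_of_pos (hg₁pos x)]; exact hg₁le x)
  have hg₂int : Integrable g₂ π :=
    (integrable_const (1:ℝ)).mono' hg₂m.aestronglyMeasurable
      (Filter.Eventually.of_forall fun x => by
        rw [Real.norm_eq_abs, abs_of_pos (hg₂pos x)]; exact hg₂le x)
  have hZd : |Z₁ - Z₂| ≤ ε := by
    calc |Z₁ - Z₂| = |∫ x, (g₁ x - g₂ x) ∂π| := by rw [integral_sub hg₁int hg₂int]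
      _ ≤ ∫ x, |g₁ x - g₂ x| ∂π := abs_int_le_int_abs _ _
      _ ≤ ∫ _x, ε ∂π := integral_mono_ae ((hg₁int.sub hg₂int).abs) (integrable_const ε) hae
      _ = ε := by simp
  have hZ₂half : Z₁/2 ≤ Z₂ := by
    have h1 := abs_le.mp hZd
    linarith [h1.2]
  have hZ₂pos' : 0 < Z₂ := by linarith
  set h₁ : X → ℝ := fun x => g₁ x / Z₁ with hh₁
  set h₂ : X → ℝ := fun x => g₂ x / Z₂ with hh₂
  have hh₁nn : ∀ x, 0 ≤ h₁ x := fun x => div_nonneg (hg₁pos x).le hZ₁.le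
  have hh₂nn : ∀ x, 0 ≤ h₂ x := fun x => div_nonneg (hg₂pos x).le hZ₂pos'.le
  have hh₁int : Integrable h₁ π := hg₁int.div_const Z₁
  have hh₂int : Integrable h₂ π := hg₂int.div_const Z₂
  set C := 1/Z₁ + 2/Z₁^2 with hC
  have hptwise : ∀ᵐ x ∂π, |h₁ x - h₂ x| ≤ C * ε := by
    filter_upwards [hae] with x hx
    have hg2 := hg₂pos x
    have hg2' := hg₂le x
    have key : h₁ x - h₂ x = (g₁ x - g₂ x)/Z₁ + g₂ x * (Z₂ - Z₁) / (Z₁ * Z₂) := by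
      simp only [hh₁, hh₂]
      field_simp
      ring
    have hA : |(g₁ x - g₂ x)/Z₁| ≤ ε/Z₁ := by
      rw [abs_div, abs_of_pos hZ₁]
      gcongr
    have hB : |g₂ x * (Z₂ - Z₁) / (Z₁ * Z₂)| ≤ ε / (Z₁ * (Z₁/2)) := by
      rw [abs_div, abs_of_pos (by positivity : (0:ℝ) < Z₁ * Z₂), abs_mul,
        abs_of_pos hg2]
      apply div_le_div₀ (by positivity) ?_ (by positivity) ?_
      · calc g₂ x * |Z₂ - Z₁| ≤ 1 * ε := by
              rw [abs_sub_comm] at hZd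
              exact mul_le_mul hg2' hZd (abs_nonneg _) zero_le_one
          _ = ε := one_mul ε
      · gcongr
    calc |h₁ x - h₂ x| = |(g₁ x - g₂ x)/Z₁ + g₂ x * (Z₂ - Z₁) / (Z₁ * Z₂)| := by rw [key]
      _ ≤ |(g₁ x - g₂ x)/Z₁| + |g₂ x * (Z₂ - Z₁) / (Z₁ * Z₂)| := abs_add_le _ _
      _ ≤ ε/Z₁ + ε / (Z₁ * (Z₁/2)) := add_le_add hA hB
      _ = C * ε := by rw [hC]; field_simp
  rw [tvDist]
  apply ciSup_le
  rintro ⟨B, hB⟩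
  have e1 : (π.withDensity (fun x => ENNReal.ofReal (g₁ x / Z₁)) B).toReal
      = ∫ x in B, h₁ x ∂π := by
    rw [withDensity_apply _ hB]
    exact (integral_eq_lintegral_of_nonneg_ae (Filter.Eventually.of_forall hh₁nn)
      ((hg₁m.div_const _).aestronglyMeasurable)).symm
  have e2 : (π.withDensity (fun x => ENNReal.ofReal (g₂ x / Z₂)) B).toReal
      = ∫ x in B, h₂ x ∂π := by
    rw [withDensity_apply _ hB]
    exact (integral_eq_lintegral_of_nonneg_ae (Filter.Eventually.of_forall hh₂nn)
      ((hg₂m.div_const _).aestronglyMeasurable)).symm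
  rw [e1, e2]
  calc |∫ x in B, h₁ x ∂π - ∫ x in B, h₂ x ∂π|
      = |∫ x in B, (h₁ x - h₂ x) ∂π| := by
        rw [integral_sub hh₁int.restrict hh₂int.restrict]
    _ ≤ ∫ x in B, |h₁ x - h₂ x| ∂π := abs_int_le_int_abs _ _
    _ ≤ ∫ x, |h₁ x - h₂ x| ∂π :=
        setIntegral_le_integral ((hh₁int.sub hh₂int).abs)
          (Filter.Eventually.of_forall fun x => abs_nonneg _)
    _ ≤ ∫ _x, C * ε ∂π :=
        integral_mono_ae ((hh₁int.sub hh₂int).abs) (integrable_const _) hptwise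
    _ = C * ε := by simp
end
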